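/- Let Q(x) = [[q₁(x)+h, q₂(x)],[q₂(x), -q₁(x)+h]] be an h-shifted AKNS potential with q₁, q₂ continuous, and let θ₂ be a C¹ solution of θ₂' = q₁ cos(2θ₂) - q₂ sin(2θ₂) + h - μ with θ₂(0) = 0, where μ ∈ ℝ. Define R(x) = [[cos θ₂(x), sin θ₂(x)],[-sin θ₂(x), cos θ₂(x)]] and P := R⁻¹ J R' + R⁻¹ Q R, where J = [[0,1],[-1,0]]. Then P is symmetric with constant (1,1)-entry equal to μ, i.e. P ∈ 𝒫_μ. -/
import Mathlib


open Set Matrix Real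

/-- If `θ₂` solves `θ₂' = q₁ cos 2θ₂ - q₂ sin 2θ₂ + h - μ`, `θ₂(0) = 0`, then
`P := R⁻¹ J R' + R⁻¹ Q R` (with `R` the rotation by `θ₂`) is symmetric with
constant `(1,1)`-entry equal to `μ`, i.e. `P ∈ 𝒫_μ`. -/
theorem stmt_8 (q₁ q₂ : ℝ → ℝ) (h mu : ℝ)
    (hq₁ : ContinuousOn q₁ (Icc (0:ℝ) 1)) (hq₂ : ContinuousOn q₂ (Icc (0:ℝ) 1))
    (J : Matrix (Fin 2) (Fin 2) ℝ) (hJ : J = !![0, 1; -1, 0])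
    (Q : ℝ → Matrix (Fin 2) (Fin 2) ℝ)
    (hQ : ∀ x, Q x = !![q₁ x + h, q₂ x; q₂ x, -q₁ x + h])
    (θ₂ θ₂' : ℝ → ℝ)
    (hode : ∀ x ∈ Icc (0:ℝ) 1,
      θ₂' x = q₁ x * Real.cos (2 * θ₂ x) - q₂ x * Real.sin (2 * θ₂ x) + h - mu)
    (hder : ∀ x ∈ Icc (0:ℝ) 1, HasDerivAt θ₂ (θ₂' x) x)
    (hic : θ₂ 0 = 0)
    (R R' : ℝ → Matrix (Fin 2) (Fin 2) ℝ)
    (hR : ∀ x, R x = !![Real.cos (θ₂ x), Real.sin (θ₂ x);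
                        -Real.sin (θ₂ x), Real.cos (θ₂ x)])
    (hR' : ∀ x, R' x = θ₂' x • !![-Real.sin (θ₂ x), Real.cos (θ₂ x);
                                   -Real.cos (θ₂ x), -Real.sin (θ₂ x)])
    (P : ℝ → Matrix (Fin 2) (Fin 2) ℝ)
    (hP : ∀ x, P x = (R x)⁻¹ * J * R' x + (R x)⁻¹ * Q x * R x) :
    ∀ x ∈ Icc (0:ℝ) 1, (P x).IsSymm ∧ P x 0 0 = mu := by
  intro x hx
  have hsc : Real.sin (θ₂ x) ^ 2 + Real.cos (θ₂ x) ^ 2 = 1 :=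
    Real.sin_sq_add_cos_sq _
  have hinv : (R x)⁻¹ = !![Real.cos (θ₂ x), -Real.sin (θ₂ x);
                           Real.sin (θ₂ x), Real.cos (θ₂ x)] := by
    apply inv_eq_right_inv
    rw [hR]
    ext i j
    fin_cases i <;> fin_cases j <;>
      simp [Matrix.mul_apply, Fin.sum_univ_two] <;>
      first
        | ring1
        | linear_combination hsc
  have key : P x =
      !![-(θ₂' x) + q₁ x * (Real.cos (θ₂ x)^2 - Real.sin (θ₂ x)^2)
           - q₂ x * (2 * Real.sin (θ₂ x) * Real.cos (θ₂ x)) + h,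
         q₁ x * (2 * Real.sin (θ₂ x) * Real.cos (θ₂ x))
           + q₂ x * (Real.cos (θ₂ x)^2 - Real.sin (θ₂ x)^2);
         q₁ x * (2 * Real.sin (θ₂ x) * Real.cos (θ₂ x))
           + q₂ x * (Real.cos (θ₂ x)^2 - Real.sin (θ₂ x)^2),
         -(θ₂' x) - (q₁ x * (Real.cos (θ₂ x)^2 - Real.sin (θ₂ x)^2)
           - q₂ x * (2 * Real.sin (θ₂ x) * Real.cos (θ₂ x))) + h] := by
    rw [hP, hinv, hJ, hQ, hR, hR']
    ext i j
    fin_cases i <;> fin_cases j <;>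
      simp [Matrix.mul_apply, Fin.sum_univ_two] <;>
      first
        | ring1
        | linear_combination (h - θ₂' x) * hsc
  constructor
  · rw [Matrix.IsSymm, key]
    ext i j
    fin_cases i <;> fin_cases j <;> simp
  · rw [key]
    have h2c : Real.cos (2 * θ₂ x) = Real.cos (θ₂ x)^2 - Real.sin (θ₂ x)^2 := by
      rw [Real.cos_two_mul]; linear_combination hsc
    have h2s : Real.sin (2 * θ₂ x) = 2 * Real.sin (θ₂ x) * Real.cos (θ₂ x) := by
      rw [Real.sin_two_mul]
    rw [hode x hx, h2c, h2s]
    simp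
    linarith [hsc]
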